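/- Let p be a positive integer, and define the polynomials G_n(p) ∈ ℝ[t] by G_0(p) = 1 and G_n(p) = (p/n) Σ_{k=1}^{n} (−1)^{k+1} B_k · G_{n−k}(p) for n ≥ 1, where B_k ∈ ℝ[t] is the k-th Bernoulli polynomial. Then for every n ≥ p+1, the polynomial G_n(p) has degree at most n − p − 1 in t; in particular, G_{p+1}(p) is a constant polynomial. -/

import Mathlib

/-!
Differentiating the recurrence, `B'_{k+1} = (k + 1) B_k` turns it into
`G'_{n+1} = (p - n) G_n`: the factor `k + 1` coming from the Bernoulli polynomials exactly
offsets the shift of `p - n` along the convolution. At `n = p` the coefficient vanishes, so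
`G_{p+1}` is constant, and each later step raises the degree by at most one.
-/

open Finset Polynomial

/-- The `k`-th Bernoulli polynomial as a real polynomial
(generating function `u e^{tu}/(e^u - 1)`, so `bernR 1 = X - 1/2`). -/
noncomputable def bernR (k : ℕ) : Polynomial ℝ :=
  (Polynomial.bernoulli k).map (algebraMap ℚ ℝ)

noncomputable def bernSum (G : ℕ → ℝ[X]) (n : ℕ) : ℝ[X] :=
  ∑ k ∈ Icc 1 n, (-1 : ℝ[X]) ^ (k + 1) * bernR k * G (n - k)

@[simp]
lemma bernR_zero : bernR 0 = 1 := by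
  simp [bernR]

lemma derivative_bernR_succ (k : ℕ) : derivative (bernR (k + 1)) = (k + 1) * bernR k := by
  simp [bernR, derivative_map, derivative_bernoulli_add_one]

@[simp]
lemma bernSum_zero (G : ℕ → ℝ[X]) : bernSum G 0 = 0 := by
  simp [bernSum]

lemma bernSum_succ (G : ℕ → ℝ[X]) (n : ℕ) :
    bernSum G (n + 1) = ∑ x ∈ antidiagonal n, (-1) ^ x.1 * bernR (x.1 + 1) * G x.2 := by
  rw [bernSum, ← Ico_add_one_right_eq_Icc, sum_Ico_eq_sum_range,
    Nat.sum_antidiagonal_eq_sum_range_succ_mk]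
  refine sum_congr (by simp) fun i _ => ?_
  rw [add_comm 1 i, Nat.add_sub_add_right, pow_succ, pow_succ]
  ring

lemma derivative_bernSum_succ (p : ℝ) (G : ℕ → ℝ[X]) (hG0 : G 0 = 1) (n : ℕ)
    (hG' : ∀ m < n, derivative (G (m + 1)) = C (p - m) * G m) :
    derivative (bernSum G (n + 1)) = G n + C (p - (n + 1)) * bernSum G n := by
  cases n with
  | zero => simp [bernSum_succ, hG0, derivative_bernR_succ]
  | succ m =>
    have hsplit : derivative (bernSum G (m + 2)) =
        ∑ x ∈ antidiagonal (m + 1), (-1) ^ x.1 * ((x.1 + 1) * bernR x.1) * G x.2 +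
        ∑ x ∈ antidiagonal (m + 1), (-1) ^ x.1 * bernR (x.1 + 1) * derivative (G x.2) := by
      simp only [bernSum_succ, derivative_sum, ← sum_add_distrib, derivative_mul,
        derivative_bernR_succ]
      refine sum_congr rfl fun x _ => ?_
      simp [derivative_pow]
    rw [hsplit, Nat.sum_antidiagonal_succ, Nat.sum_antidiagonal_succ', bernSum_succ, mul_sum]
    simp only [hG0, derivative_one, bernR_zero]
    rw [add_add_add_comm, ← sum_add_distrib]
    congr 1
    · simp
    refine sum_congr rfl fun x hx => ?_
    have hij : x.1 + x.2 = m := mem_antidiagonal.mp hx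
    rw [hG' x.2 (by omega)]
    have hij' : (x.1 : ℝ[X]) + x.2 = m := by exact_mod_cast hij
    push_cast [map_sub, map_add, map_natCast, map_one]
    linear_combination -(-1) ^ x.1 * bernR (x.1 + 1) * G x.2 * hij'

lemma natCast_mul_eq_C_mul_bernSum (p : ℝ) (G : ℕ → ℝ[X])
    (hG : ∀ n : ℕ, 1 ≤ n → G n = C (p / n) * bernSum G n) (n : ℕ) :
    (n : ℝ[X]) * G n = C p * bernSum G n := by
  rcases Nat.eq_zero_or_pos n with rfl | hn
  · simp
  rw [hG n hn, ← mul_assoc, ← C_eq_natCast, ← C_mul, mul_div_cancel₀ _ (by positivity)]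

lemma derivative_succ_eq_of_natCast_mul_eq (p : ℝ) (G : ℕ → ℝ[X]) (hG0 : G 0 = 1)
    (hrec : ∀ n : ℕ, (n : ℝ[X]) * G n = C p * bernSum G n) (n : ℕ) :
    derivative (G (n + 1)) = C (p - n) * G n := by
  induction n using Nat.strong_induction_on with
  | _ n ih =>
    have key : ((n : ℝ[X]) + 1) * derivative (G (n + 1)) = ((n : ℝ[X]) + 1) * (C (p - n) * G n) :=
      calc ((n : ℝ[X]) + 1) * derivative (G (n + 1))
          = derivative (C p * bernSum G (n + 1)) := by
            rw [← hrec, derivative_natCast_mul, Nat.cast_succ]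
        _ = C p * (G n + C (p - (n + 1)) * bernSum G n) := by
            rw [derivative_C_mul, derivative_bernSum_succ p G hG0 n ih]
        _ = _ := by
            simp only [map_sub, map_add, map_natCast, map_one]
            linear_combination (n + 1 - C p) * hrec n
    exact mul_left_cancel₀ (Nat.cast_add_one_ne_zero n) key

lemma natDegree_le_of_derivative_eq_C_mul {R : Type*} [Semiring R] [IsAddTorsionFree R]
    (G : ℕ → R[X]) (a : ℕ → R) (hder : ∀ n, derivative (G (n + 1)) = C (a n) * G n)
    (c : ℕ) (hc : a c = 0) (m : ℕ) : (G (c + 1 + m)).natDegree ≤ m := by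
  induction m with
  | zero => exact (derivative_eq_zero.1 (by rw [hder, hc, C_0, zero_mul])).le
  | succ m ih =>
    show (G (c + 1 + m + 1)).natDegree ≤ m + 1
    have := (natDegree_C_mul_le (a (c + 1 + m)) _).trans ih
    rw [← hder, natDegree_derivative] at this
    omega

theorem G_degree_of_pos_int_ge_general
    (p : ℕ)
    (G : ℕ → Polynomial ℝ) (hG0 : G 0 = 1)
    (hG : ∀ n : ℕ, 1 ≤ n →
      G n = Polynomial.C ((p : ℝ) / (n : ℝ)) *
        ∑ k ∈ Finset.Icc 1 n, (-1 : Polynomial ℝ) ^ (k + 1) * bernR k * G (n - k)) :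
    (∀ n : ℕ, p + 1 ≤ n → (G n).degree ≤ (n - p - 1 : ℕ)) ∧
      (G (p + 1)).degree ≤ 0 := by
  have hder := derivative_succ_eq_of_natCast_mul_eq p G hG0 (natCast_mul_eq_C_mul_bernSum p G hG)
  have hdeg := natDegree_le_of_derivative_eq_C_mul G (fun n => (p : ℝ) - n) hder p (sub_self _)
  refine ⟨fun n hn => ?_, natDegree_eq_zero_iff_degree_le_zero.1 (Nat.le_zero.1 (hdeg 0))⟩
  obtain ⟨m, rfl⟩ := Nat.exists_eq_add_of_le hn
  rw [show p + 1 + m - p - 1 = m by omega]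
  exact degree_le_of_natDegree_le (hdeg m)

/-- if `p` is a positive integer, then for `n ≥ p + 1` the
polynomial `Gₙ(p) ∈ ℝ[t]` has degree at most `n - p - 1`; in particular
`G_{p+1}(p)` is a constant polynomial. -/
theorem G_degree_of_pos_int_ge
    (p : ℕ) (hp : 0 < p)
    (G : ℕ → Polynomial ℝ) (hG0 : G 0 = 1)
    (hG : ∀ n : ℕ, 1 ≤ n →
      G n = Polynomial.C ((p : ℝ) / (n : ℝ)) *
        ∑ k ∈ Finset.Icc 1 n, (-1 : Polynomial ℝ) ^ (k + 1) * bernR k * G (n - k)) :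
    (∀ n : ℕ, p + 1 ≤ n → (G n).degree ≤ (n - p - 1 : ℕ)) ∧
      (G (p + 1)).degree ≤ 0 :=
  G_degree_of_pos_int_ge_general p G hG0 hG
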